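/- arXiv:2002.08106 — 3 statements merged into one kernel-verified Lean document; each statement's English description precedes it below -/
import Mathlib

section
/- Let n ≥ 1 and let W ∈ ℝ^{n×n}. The discrete-time protocol x(t+1) = W x(t) reaches average consensus from every initial condition — i.e., for every x(0) ∈ ℝⁿ, lim_{t→∞} Wᵗ x(0) = ((1ᵀx(0))/n)·1 — if and only if W1 = 1, Wᵀ1 = 1, and ρ(W − (1/n)11ᵀ) < 1. -/
open Matrix Filter

/-- Spectral radius of a real matrix: the maximum modulus of its complex eigenvalues. -/
noncomputable def specRad {n : ℕ} (A : Matrix (Fin n) (Fin n) ℝ) : ℝ :=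
  sSup {r : ℝ | ∃ μ : ℂ, μ ∈ spectrum ℂ (A.map Complex.ofReal) ∧ r = ‖μ‖}

/-- Induced 2-norm (largest singular value) of a real matrix. -/
noncomputable def ind2norm {n : ℕ} (A : Matrix (Fin n) (Fin n) ℝ) : ℝ :=
  ‖Matrix.toEuclideanCLM (𝕜 := ℝ) A‖

/-- The matrix (1/n)·11ᵀ, with every entry 1/n. -/
noncomputable def Jmat (n : ℕ) : Matrix (Fin n) (Fin n) ℝ :=
  Matrix.of fun _ _ => (1 : ℝ) / n

/-!
Once `W 1 = 1` and `Wᵀ 1 = 1`, the idempotent `J` satisfies `W J = J W = J`, so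
`(W - J)ᵗ = Wᵗ - J` for `t ≥ 1`. Average consensus means `Wᵗ → J`; both identities are then forced
(`W J` and `J W` are limits of `Wᵗ⁺¹`), and what remains is `(W - J)ᵗ → 0`. By Gelfand's formula
`‖Aᵗ‖^{1/t} → ρ(A)`, powers of a matrix tend to zero exactly when `ρ(A) < 1`.
-/

open scoped ENNReal NNReal Topology

section IdempotentLimit

variable {R : Type*} [Ring R] {w e : R}

theorem pow_mul_eq_of_mul_eq (h : w * e = e) (t : ℕ) : w ^ t * e = e := by
  induction t with
  | zero => rw [pow_zero, one_mul]
  | succ t ih => rw [pow_succ, mul_assoc, h, ih]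

theorem sub_pow_succ_of_isIdempotentElem (he : IsIdempotentElem e) (hwe : w * e = e)
    (hew : e * w = e) (t : ℕ) : (w - e) ^ (t + 1) = w ^ (t + 1) - e := by
  induction t with
  | zero => rw [zero_add, pow_one, pow_one]
  | succ t ih =>
    rw [pow_succ, ih, sub_mul, mul_sub, mul_sub, pow_mul_eq_of_mul_eq hwe, hew, he.eq, ← pow_succ]
    abel

variable [TopologicalSpace R] [IsTopologicalRing R] [T2Space R]

theorem tendsto_pow_atTop_nhds_iff_of_isIdempotentElem (he : IsIdempotentElem e) :
    Tendsto (w ^ ·) atTop (𝓝 e) ↔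
      w * e = e ∧ e * w = e ∧ Tendsto ((w - e) ^ ·) atTop (𝓝 0) := by
  constructor
  · intro h
    have h_succ : Tendsto (fun t : ℕ => w ^ (t + 1)) atTop (𝓝 e) :=
      (tendsto_add_atTop_iff_nat 1).mpr h
    have hwe : w * e = e := by
      refine tendsto_nhds_unique ?_ h_succ
      simpa only [pow_succ'] using h.const_mul w
    have hew : e * w = e := by
      refine tendsto_nhds_unique ?_ h_succ
      simpa only [pow_succ] using h.mul_const w
    refine ⟨hwe, hew, (tendsto_add_atTop_iff_nat 1).mp ?_⟩
    simpa only [sub_pow_succ_of_isIdempotentElem he hwe hew, sub_self] using h_succ.sub_const e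
  · rintro ⟨hwe, hew, h⟩
    refine (tendsto_add_atTop_iff_nat 1).mp ?_
    have := ((tendsto_add_atTop_iff_nat 1).mpr h).add_const e
    simpa only [sub_pow_succ_of_isIdempotentElem he hwe hew, sub_add_cancel, zero_add] using this

end IdempotentLimit

namespace spectrum

variable {𝕜 A : Type*} [NontriviallyNormedField 𝕜] [NormedRing A] [NormedAlgebra 𝕜 A]
  [CompleteSpace A]

theorem spectralRadius_lt_iff_forall_lt [ProperSpace 𝕜] {a : A} {r : ℝ≥0} (hr : 0 < r) :
    spectralRadius 𝕜 a < r ↔ ∀ k ∈ spectrum 𝕜 a, ‖k‖₊ < r := by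
  refine ⟨fun h k hk => ?_, fun h => ?_⟩
  · exact ENNReal.coe_lt_coe.mp ((le_iSup₂ (f := fun k _ => (‖k‖₊ : ℝ≥0∞)) k hk).trans_lt h)
  · rcases (spectrum 𝕜 a).eq_empty_or_nonempty with hσ | hσ
    · simpa [spectralRadius, hσ] using hr
    · exact spectralRadius_lt_of_forall_lt_of_nonempty hσ h

theorem spectralRadius_lt_one_of_tendsto_pow_atTop_nhds_zero {a : A}
    (h : Tendsto (a ^ ·) atTop (𝓝 0)) : spectralRadius 𝕜 a < 1 := by
  have h_norm : Tendsto (fun t : ℕ => ‖a ^ t‖₊ * ‖(1 : A)‖₊) atTop (𝓝 0) := by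
    simpa using (continuous_nnnorm.tendsto 0).comp h |>.mul_const ‖(1 : A)‖₊
  obtain ⟨t, ht_lt, ht⟩ :=
    ((h_norm.eventually_lt_const one_pos).and (eventually_ge_atTop 1)).exists
  have : spectralRadius 𝕜 a ^ t < 1 :=
    calc spectralRadius 𝕜 a ^ t ≤ spectralRadius 𝕜 (a ^ t) := spectralRadius_pow_le a t (by omega)
      _ ≤ ‖a ^ t‖₊ * ‖(1 : A)‖₊ := by
        simpa using spectralRadius_le_pow_nnnorm_pow_one_div 𝕜 (a ^ t) 0
      _ < 1 := mod_cast ht_lt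
  exact (pow_lt_one_iff (by omega)).mp this

theorem tendsto_pow_atTop_nhds_zero_of_spectralRadius_lt_one [NormedAlgebra ℂ A] {a : A}
    (h : spectralRadius ℂ a < 1) : Tendsto (a ^ ·) atTop (𝓝 0) := by
  obtain ⟨r, hρr, hr⟩ := ENNReal.lt_iff_exists_nnreal_btwn.mp h
  have h_bound : ∀ᶠ t : ℕ in atTop, ‖a ^ t‖ ≤ (r : ℝ) ^ t := by
    filter_upwards [(pow_nnnorm_pow_one_div_tendsto_nhds_spectralRadius a).eventually_lt_const hρr,
      eventually_gt_atTop 0] with t ht ht0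
    rw [one_div, ENNReal.rpow_inv_lt_iff (by positivity), ENNReal.rpow_natCast] at ht
    exact_mod_cast ht.le
  exact squeeze_zero_norm' h_bound (tendsto_pow_atTop_nhds_zero_of_lt_one r.2 (mod_cast hr))

theorem tendsto_pow_atTop_nhds_zero_iff_spectralRadius_lt_one [NormedAlgebra ℂ A] (a : A) :
    Tendsto (a ^ ·) atTop (𝓝 0) ↔ spectralRadius ℂ a < 1 :=
  ⟨spectralRadius_lt_one_of_tendsto_pow_atTop_nhds_zero,
    tendsto_pow_atTop_nhds_zero_of_spectralRadius_lt_one⟩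

end spectrum

theorem Matrix.tendsto_iff_forall_tendsto_mulVec {α m n R : Type*} [Fintype n]
    [NonAssocSemiring R] [TopologicalSpace R] [ContinuousAdd R] [ContinuousMul R]
    {l : Filter α} {M : α → Matrix m n R} {L : Matrix m n R} :
    Tendsto M l (𝓝 L) ↔ ∀ x, Tendsto (fun a => M a *ᵥ x) l (𝓝 (L *ᵥ x)) := by
  classical
  refine ⟨fun h x => ?_, fun h => ?_⟩
  · exact ((continuous_id.matrix_mulVec continuous_const).tendsto L).comp h
  · refine tendsto_pi_nhds.2 fun i => tendsto_pi_nhds.2 fun j => ?_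
    simpa [mulVec_single_one] using tendsto_pi_nhds.1 (h (Pi.single j 1)) i

section SpectralRadius

-- The ℓ∞ operator norm induces the entrywise topology, so Gelfand's formula speaks about
-- entrywise convergence of powers.
attribute [local instance] Matrix.linftyOpNormedRing Matrix.linftyOpNormedAlgebra

theorem specRad_lt_iff {n : ℕ} (A : Matrix (Fin n) (Fin n) ℝ) {r : ℝ} (hr : 0 < r) :
    specRad A < r ↔ ∀ μ ∈ spectrum ℂ (A.map Complex.ofReal), ‖μ‖ < r := by
  have h_image : {r : ℝ | ∃ μ : ℂ, μ ∈ spectrum ℂ (A.map Complex.ofReal) ∧ r = ‖μ‖} =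
      (‖·‖) '' spectrum ℂ (A.map Complex.ofReal) := by
    ext; simp [eq_comm]
  rw [specRad, h_image]
  rcases (spectrum ℂ (A.map Complex.ofReal)).eq_empty_or_nonempty with hσ | hσ
  · simpa [hσ] using hr
  · rw [((Matrix.finite_spectrum _).image _).csSup_lt_iff (hσ.image _), Set.forall_mem_image]

theorem tendsto_pow_atTop_nhds_zero_iff_specRad_lt_one {n : ℕ} (A : Matrix (Fin n) (Fin n) ℝ) :
    Tendsto (A ^ ·) atTop (𝓝 0) ↔ specRad A < 1 := by
  have h_map : ∀ t : ℕ, (A ^ t).map Complex.ofReal = A.map Complex.ofReal ^ t :=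
    map_pow Complex.ofRealHom.mapMatrix A
  rw [Complex.isometry_ofReal.isEmbedding.matrix_map.tendsto_nhds_iff,
    Matrix.map_zero _ Complex.ofReal_zero]
  simp only [Function.comp_def, h_map]
  refine (spectrum.tendsto_pow_atTop_nhds_zero_iff_spectralRadius_lt_one _).trans ?_
  rw [specRad_lt_iff A one_pos, ← ENNReal.coe_one, spectrum.spectralRadius_lt_iff_forall_lt one_pos]
  simp only [← NNReal.coe_lt_coe, coe_nnnorm, NNReal.coe_one]

end SpectralRadius

theorem Jmat_mulVec (n : ℕ) (x : Fin n → ℝ) : Jmat n *ᵥ x = fun _ => (∑ i, x i) / n := by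
  ext
  simp [Jmat, mulVec, dotProduct, div_eq_mul_inv, Finset.sum_mul, mul_comm]

theorem isIdempotentElem_Jmat (n : ℕ) : IsIdempotentElem (Jmat n) := by
  ext i j
  have : (n : ℝ) ≠ 0 := Nat.cast_ne_zero.mpr i.pos.ne'
  simp only [Jmat, one_div, mul_apply, of_apply, Finset.sum_const, Finset.card_univ,
    Fintype.card_fin, nsmul_eq_mul]
  field_simp

theorem mul_Jmat_eq_Jmat_iff {n : ℕ} (W : Matrix (Fin n) (Fin n) ℝ) :
    W * Jmat n = Jmat n ↔ W *ᵥ (fun _ => 1) = fun _ => 1 := by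
  have h_entry : ∀ i j, (W * Jmat n) i j = (W *ᵥ fun _ => 1) i / n := by
    intro i j
    simp [Jmat, mul_apply, mulVec, dotProduct, div_eq_mul_inv, Finset.sum_mul]
  constructor
  · intro h
    funext i
    have hn : (n : ℝ) ≠ 0 := Nat.cast_ne_zero.mpr i.pos.ne'
    have h_ii : (W *ᵥ fun _ => 1) i / n = 1 / n := by rw [← h_entry i i, h]; rfl
    exact (div_left_inj' hn).mp h_ii
  · intro h
    ext i j
    rw [h_entry, h]
    rfl

theorem Jmat_mul_eq_Jmat_iff {n : ℕ} (W : Matrix (Fin n) (Fin n) ℝ) :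
    Jmat n * W = Jmat n ↔ Wᵀ *ᵥ (fun _ => 1) = fun _ => 1 := by
  have h_symm : (Jmat n)ᵀ = Jmat n := rfl
  rw [← mul_Jmat_eq_Jmat_iff, ← transpose_inj, transpose_mul, h_symm]

theorem average_consensus_iff_general (n : ℕ) (W : Matrix (Fin n) (Fin n) ℝ) :
    (∀ x0 : Fin n → ℝ,
      Tendsto (fun t : ℕ => (W ^ t).mulVec x0) atTop
        (nhds (fun _ => (∑ i, x0 i) / n))) ↔
    (W.mulVec (fun _ => 1) = (fun _ => 1) ∧
     Wᵀ.mulVec (fun _ => 1) = (fun _ => 1) ∧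
     specRad (W - Jmat n) < 1) := by
  simp only [← Jmat_mulVec]
  rw [← Matrix.tendsto_iff_forall_tendsto_mulVec,
    tendsto_pow_atTop_nhds_iff_of_isIdempotentElem (isIdempotentElem_Jmat n),
    mul_Jmat_eq_Jmat_iff, Jmat_mul_eq_Jmat_iff, tendsto_pow_atTop_nhds_zero_iff_specRad_lt_one]

theorem average_consensus_iff (n : ℕ) (hn : 1 ≤ n) (W : Matrix (Fin n) (Fin n) ℝ) :
    (∀ x0 : Fin n → ℝ,
      Tendsto (fun t : ℕ => (W ^ t).mulVec x0) atTop
        (nhds (fun _ => (∑ i, x0 i) / n))) ↔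
    (W.mulVec (fun _ => 1) = (fun _ => 1) ∧
     Wᵀ.mulVec (fun _ => 1) = (fun _ => 1) ∧
     specRad (W - Jmat n) < 1) :=
  average_consensus_iff_general n W
end

section
/- Let n ≥ 2 and let G = (V,E) be an undirected connected graph on V = {1,…,n} with (i,i) ∈ E for every i. Suppose W ∈ ℝ^{n×n} is entrywise nonnegative and satisfies W1 = 1, Wᵀ1 = 1, and W_{ij} > 0 for every (i,j) ∈ E. Then ρ(W − (1/n)11ᵀ) < 1. -/
open Matrix Filter

/-!
If `(W - J) v = μ v` with `μ ≠ 0`, then `∑ vᵢ = 0` because the columns of `W - J` sum to zero,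
hence `J v = 0` and `v` is an eigenvector of `W` itself. Suppose `1 ≤ |μ|` and pick `j` with
`|v j|` maximal. Row `j` of `W v = μ v` writes `μ v j` as a convex combination of entries of
modulus at most `|v j| ≤ |μ v j|`, so by strict convexity of the norm every entry with positive
weight equals `μ v j`. The positive diagonal gives `μ = 1`, connectivity then makes `v`
constant, and `∑ vᵢ = 0` makes it zero.
-/

open scoped RealInnerProductSpace

theorem eq_sum_smul_of_le_norm_sum_smul {E ι : Type*} [NormedAddCommGroup E]
    [InnerProductSpace ℝ E] [Fintype ι] {w : ι → ℝ} {z : ι → E} {c : ℝ}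
    (hw : ∀ i, 0 ≤ w i) (hw1 : ∑ i, w i = 1) (hz : ∀ i, ‖z i‖ ≤ c)
    (hc : c ≤ ‖∑ i, w i • z i‖) {k : ι} (hk : 0 < w k) :
    z k = ∑ i, w i • z i := by
  set s := ∑ i, w i • z i
  have hc0 : 0 ≤ c := (norm_nonneg _).trans (hz k)
  have hvar : ∑ i, w i * ‖z i - s‖ ^ 2 ≤ 0 := calc
    ∑ i, w i * ‖z i - s‖ ^ 2 = ∑ i, w i * (‖z i‖ ^ 2 + ‖s‖ ^ 2) - 2 * ⟪s, s⟫ := by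
        simp only [norm_sub_sq_real, s, sum_inner, inner_smul_left, Finset.mul_sum,
          ← Finset.sum_sub_distrib]
        refine Finset.sum_congr rfl fun i _ => ?_
        simp only [RCLike.conj_to_real]
        ring
    _ ≤ ∑ i, w i * (c ^ 2 + ‖s‖ ^ 2) - 2 * ‖s‖ ^ 2 := by
        rw [real_inner_self_eq_norm_sq]
        gcongr with i
        · exact hw i
        · exact hz i
    _ = c ^ 2 - ‖s‖ ^ 2 := by rw [← Finset.sum_mul, hw1]; ring
    _ ≤ 0 := by nlinarith
  have hterm := (Finset.sum_eq_zero_iff_of_nonneg fun i _ => mul_nonneg (hw i) (sq_nonneg _)).1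
    (hvar.antisymm (Finset.sum_nonneg fun i _ => mul_nonneg (hw i) (sq_nonneg _))) k
    (Finset.mem_univ k)
  simpa [hk.ne', sub_eq_zero] using hterm

theorem dotProduct_eq_zero_of_vecMul_eq_zero_of_mulVec_eq_smul {K ι : Type*} [Field K] [Fintype ι]
    {A : Matrix ι ι K} {u v : ι → K} {μ : K} (hu : u ᵥ* A = 0) (heig : A *ᵥ v = μ • v)
    (hμ : μ ≠ 0) : u ⬝ᵥ v = 0 := by
  have : μ * (u ⬝ᵥ v) = 0 := by
    rw [← smul_eq_mul, ← dotProduct_smul, ← heig, dotProduct_mulVec, hu, zero_dotProduct]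
  exact (mul_eq_zero.mp this).resolve_left hμ

theorem exists_mulVec_eq_smul_of_mem_spectrum {K ι : Type*} [Field K] [Fintype ι] [DecidableEq ι]
    {A : Matrix ι ι K} {μ : K} (hμ : μ ∈ spectrum K A) : ∃ v, v ≠ 0 ∧ A *ᵥ v = μ • v := by
  rw [← spectrum_toLin', ← Module.End.hasEigenvalue_iff_mem_spectrum] at hμ
  obtain ⟨v, hv, hv0⟩ := hμ.exists_hasEigenvector
  exact ⟨v, hv0, by simpa using Module.End.mem_eigenspace_iff.mp hv⟩

theorem specRad_lt_of_forall_mulVec_eq_smul {n : ℕ} {A : Matrix (Fin n) (Fin n) ℝ} {r : ℝ}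
    (hr : 0 < r)
    (h : ∀ (μ : ℂ) (v : Fin n → ℂ), v ≠ 0 → A.map Complex.ofReal *ᵥ v = μ • v → ‖μ‖ < r) :
    specRad A < r := by
  have hS : {x : ℝ | ∃ μ : ℂ, μ ∈ spectrum ℂ (A.map Complex.ofReal) ∧ x = ‖μ‖} =
      norm '' spectrum ℂ (A.map Complex.ofReal) := by
    ext; simp [eq_comm]
  rw [specRad, hS]
  rcases (spectrum ℂ (A.map Complex.ofReal)).eq_empty_or_nonempty with hempty | hne
  · simpa [hempty] using hr
  rw [((finite_spectrum _).image _).csSup_lt_iff (hne.image _)]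
  rintro _ ⟨μ, hμ, rfl⟩
  obtain ⟨v, hv, heig⟩ := exists_mulVec_eq_smul_of_mem_spectrum hμ
  exact h μ v hv heig

section RowStochastic

variable {ι : Type*} [Fintype ι] {W : Matrix ι ι ℝ} {v : ι → ℂ} {μ : ℂ}

theorem mul_apply_eq_sum_smul_of_mulVec_eq_smul (heig : W.map Complex.ofReal *ᵥ v = μ • v)
    (i : ι) : μ * v i = ∑ j, W i j • v j := by
  simpa [mulVec, dotProduct, Complex.real_smul] using (congrFun heig i).symm

theorem eq_mul_of_mulVec_eq_smul_of_one_le_norm [DecidableEq ι] (hW : W ∈ rowStochastic ℝ ι)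
    (heig : W.map Complex.ofReal *ᵥ v = μ • v) (hμ : 1 ≤ ‖μ‖) {j : ι}
    (hj : ∀ i, ‖v i‖ ≤ ‖v j‖) {k : ι} (hk : 0 < W j k) : v k = μ * v j := by
  rw [mul_apply_eq_sum_smul_of_mulVec_eq_smul heig]
  refine eq_sum_smul_of_le_norm_sum_smul (fun i => nonneg_of_mem_rowStochastic hW)
    (sum_row_of_mem_rowStochastic hW j) hj ?_ hk
  rw [← mul_apply_eq_sum_smul_of_mulVec_eq_smul heig, norm_mul]
  exact le_mul_of_one_le_left (norm_nonneg _) hμ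

theorem norm_lt_one_of_mulVec_eq_smul_of_sum_eq_zero [DecidableEq ι] (hW : W ∈ rowStochastic ℝ ι)
    (hdiag : ∀ i, 0 < W i i) (hconn : ∀ i j, Relation.ReflTransGen (fun i j => 0 < W i j) i j)
    (heig : W.map Complex.ofReal *ᵥ v = μ • v) (hv : v ≠ 0) (hsum : ∑ i, v i = 0) :
    ‖μ‖ < 1 := by
  obtain ⟨i, hi⟩ := Function.ne_iff.mp hv
  have : Nonempty ι := ⟨i⟩
  obtain ⟨j, hj⟩ := Finite.exists_max fun i => ‖v i‖
  have hvj : v j ≠ 0 := norm_pos_iff.mp ((norm_pos_iff.mpr hi).trans_le (hj i))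
  by_contra! hμ
  have hμ1 : μ = 1 := by
    have := eq_mul_of_mulVec_eq_smul_of_one_le_norm hW heig hμ hj (hdiag j)
    exact (mul_eq_right₀ hvj).mp this.symm
  -- an entry equal to `v j` again has maximal modulus
  have hconst : ∀ k, v k = v j := by
    intro k
    induction hconn j k with
    | refl => rfl
    | tail _ hab ih =>
      rw [eq_mul_of_mulVec_eq_smul_of_one_le_norm hW heig hμ (by rwa [ih]) hab, hμ1, one_mul, ih]
  simp only [hconst, Finset.sum_const, Finset.card_univ, nsmul_eq_mul, mul_eq_zero,
    Nat.cast_eq_zero, Fintype.card_ne_zero, false_or] at hsum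
  exact hvj hsum

end RowStochastic

theorem Jmat_map_mulVec_of_sum_eq_zero {n : ℕ} {v : Fin n → ℂ} (hv : ∑ i, v i = 0) :
    (Jmat n).map Complex.ofReal *ᵥ v = 0 := by
  ext i
  simp [mulVec, dotProduct, Jmat, ← Finset.mul_sum, hv]

theorem one_vecMul_map_sub_Jmat {n : ℕ} {W : Matrix (Fin n) (Fin n) ℝ} (hcol : 1 ᵥ* W = 1) :
    (1 : Fin n → ℂ) ᵥ* (W - Jmat n).map Complex.ofReal = 0 := by
  ext j
  have hn : (n : ℂ) ≠ 0 := Nat.cast_ne_zero.mpr (Fin.pos j).ne'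
  have hcolj : ∑ i, W i j = 1 := by simpa [vecMul, dotProduct] using congrFun hcol j
  simp [vecMul, dotProduct, Jmat, ← Complex.ofReal_sum, Finset.sum_sub_distrib, hcolj, hn]

theorem positive_weights_on_connected_graph_spectral_radius_lt_one_general
    (n : ℕ) (E : Fin n → Fin n → Prop)
    (hrefl : ∀ i, E i i)
    (hconn : ∀ i j, Relation.ReflTransGen E i j)
    (W : Matrix (Fin n) (Fin n) ℝ)
    (hnonneg : ∀ i j, 0 ≤ W i j)
    (hrow : W.mulVec (fun _ => 1) = (fun _ => 1))
    (hcol : Wᵀ.mulVec (fun _ => 1) = (fun _ => 1))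
    (hpos : ∀ i j, E i j → 0 < W i j) :
    specRad (W - Jmat n) < 1 := by
  have hW : W ∈ rowStochastic ℝ (Fin n) := mem_rowStochastic.mpr ⟨hnonneg, hrow⟩
  refine specRad_lt_of_forall_mulVec_eq_smul one_pos fun μ v hv heig => ?_
  rcases eq_or_ne μ 0 with rfl | hμ
  · simp
  have hsum : ∑ i, v i = 0 := by
    simpa [one_dotProduct] using dotProduct_eq_zero_of_vecMul_eq_zero_of_mulVec_eq_smul
      (one_vecMul_map_sub_Jmat (by rwa [← mulVec_transpose])) heig hμ
  rw [Matrix.map_sub _ Complex.ofReal_sub, sub_mulVec, Jmat_map_mulVec_of_sum_eq_zero hsum,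
    sub_zero] at heig
  exact norm_lt_one_of_mulVec_eq_smul_of_sum_eq_zero hW (fun i => hpos i i (hrefl i))
    (fun i j => Relation.ReflTransGen.mono hpos _ _ (hconn i j)) heig hv hsum

theorem positive_weights_on_connected_graph_spectral_radius_lt_one
    (n : ℕ) (hn : 2 ≤ n) (E : Fin n → Fin n → Prop)
    (hsymm : ∀ i j, E i j → E j i)
    (hrefl : ∀ i, E i i)
    (hconn : ∀ i j, Relation.ReflTransGen E i j)
    (W : Matrix (Fin n) (Fin n) ℝ)
    (hnonneg : ∀ i j, 0 ≤ W i j)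
    (hrow : W.mulVec (fun _ => 1) = (fun _ => 1))
    (hcol : Wᵀ.mulVec (fun _ => 1) = (fun _ => 1))
    (hpos : ∀ i j, E i j → 0 < W i j) :
    specRad (W - Jmat n) < 1 :=
  positive_weights_on_connected_graph_spectral_radius_lt_one_general n E hrefl hconn W hnonneg hrow
    hcol hpos
end

section
/- Let n ≥ 2 and let G be an undirected connected simple graph on vertices {1,…,n} (no self-loops), with d_i denoting the degree of vertex i. Define the Metropolis weight matrix W_M ∈ ℝ^{n×n} by: (W_M)_{ij} = min{1/(1+d_i), 1/(1+d_j)} if i ≠ j and i,j are adjacent; (W_M)_{ij} = 0 if i ≠ j and i,j are not adjacent; and (W_M)_{ii} = 1 − Σ_{j adjacent to i} (W_M)_{ij}. Then W_M is symmetric, entrywise nonnegative, satisfies W_M 1 = 1 and W_Mᵀ 1 = 1, has strictly positive diagonal entries, and satisfies ρ(W_M − (1/n)11ᵀ) < 1, i.e., W_M satisfies the average consensus condition. -/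
open Matrix Filter

/-!
The Metropolis matrix `W` has nonnegative entries, row sums `1`, positive diagonal, positive
entries on the edges of `G`, and is symmetric, hence doubly stochastic. Since `W - J` is
symmetric, its spectral radius is the largest `|t|` over real eigenpairs `(W - J) u = t • u`.
For `t ≠ 0` the coordinates of `u` sum to zero (both `W` and `J` preserve coordinate sums), so
`J u = 0` and `W u = t • u`. Comparing both sides at a coordinate of maximal modulus gives
`|t| ≤ 1`; `t = -1` is excluded by the positive diagonal, and `t = 1` by the maximum principle
on the connected graph, which makes `u` constant and therefore zero.
-/

theorem SimpleGraph.Preconnected.mem_of_adj_closed {V : Type*} {G : SimpleGraph V}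
    (hG : G.Preconnected) {s : Set V} (hs : ∀ ⦃i j⦄, G.Adj i j → i ∈ s → j ∈ s)
    {i : V} (hi : i ∈ s) (j : V) : j ∈ s := by
  obtain ⟨w⟩ := hG i j
  induction w with
  | nil => exact hi
  | cons hadj _ ih => exact ih (hs hadj hi)

theorem Finset.abs_sum_mul_le {ι R : Type*} [Ring R] [LinearOrder R]
    [IsStrictOrderedRing R] (s : Finset ι) {w u : ι → R} {M : R} (hw : ∀ j ∈ s, 0 ≤ w j)
    (hu : ∀ j ∈ s, |u j| ≤ M) :
    |∑ j ∈ s, w j * u j| ≤ (∑ j ∈ s, w j) * M :=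
  calc |∑ j ∈ s, w j * u j| ≤ ∑ j ∈ s, |w j * u j| := Finset.abs_sum_le_sum_abs _ _
    _ ≤ ∑ j ∈ s, w j * M := Finset.sum_le_sum fun j hj => by
        rw [abs_mul, abs_of_nonneg (hw j hj)]
        exact mul_le_mul_of_nonneg_left (hu j hj) (hw j hj)
    _ = (∑ j ∈ s, w j) * M := (Finset.sum_mul _ _ _).symm

namespace Matrix

open Finset

section RowStochastic

variable {ι R : Type*} [Fintype ι] [DecidableEq ι] [Field R] [LinearOrder R]
  [IsStrictOrderedRing R] {W : Matrix ι ι R} {u : ι → R}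

theorem abs_mulVec_apply_sub_diag_le (hW : W ∈ rowStochastic R ι) {M : R}
    (hu : ∀ j, |u j| ≤ M) (i : ι) : |(W *ᵥ u) i - W i i * u i| ≤ (1 - W i i) * M := by
  have hoff : (W *ᵥ u) i - W i i * u i = ∑ j ∈ univ.erase i, W i j * u j := by
    rw [mulVec, dotProduct, ← add_sum_erase _ _ (mem_univ i), add_sub_cancel_left]
  have hrow : ∑ j ∈ univ.erase i, W i j = 1 - W i i := by
    rw [← sum_row_of_mem_rowStochastic hW i, ← add_sum_erase _ _ (mem_univ i),
      add_sub_cancel_left]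
  rw [hoff, ← hrow]
  exact abs_sum_mul_le _ (fun j _ => hW.1 i j) fun j _ => hu j

theorem abs_mulVec_apply_le (hW : W ∈ rowStochastic R ι) {M : R} (hu : ∀ j, |u j| ≤ M)
    (i : ι) : |(W *ᵥ u) i| ≤ M := by
  have hdiag : |W i i * u i| ≤ W i i * M := by
    rw [abs_mul, abs_of_nonneg (hW.1 i i)]
    exact mul_le_mul_of_nonneg_left (hu i) (hW.1 i i)
  linarith [abs_mulVec_apply_sub_diag_le hW hu i,
    abs_sub_abs_le_abs_sub ((W *ᵥ u) i) (W i i * u i)]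

theorem abs_le_one_of_mulVec_eq_smul (hW : W ∈ rowStochastic R ι) (hu : u ≠ 0) {t : R}
    (h : W *ᵥ u = t • u) : |t| ≤ 1 := by
  obtain ⟨k, hk⟩ := Function.ne_iff.mp hu
  have : Nonempty ι := ⟨k⟩
  obtain ⟨i, hi⟩ := Finite.exists_max fun j => |u j|
  have hpos : 0 < |u i| := (abs_pos.mpr hk).trans_le (hi k)
  have hle := abs_mulVec_apply_le hW hi i
  rw [h, Pi.smul_apply, smul_eq_mul, abs_mul] at hle
  exact (mul_le_iff_le_one_left hpos).mp hle

theorem eq_zero_of_mulVec_eq_neg (hW : W ∈ rowStochastic R ι) (hdiag : ∀ i, 0 < W i i)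
    (h : W *ᵥ u = -u) : u = 0 := by
  funext k
  have : Nonempty ι := ⟨k⟩
  obtain ⟨i, hi⟩ := Finite.exists_max fun j => |u j|
  -- at `i`, the off-diagonal part `-(1 + W i i) * u i` has modulus at most `(1 - W i i) * |u i|`
  have hle := abs_mulVec_apply_sub_diag_le hW hi i
  rw [h, Pi.neg_apply, ← neg_add', abs_neg, ← one_add_mul, abs_mul,
    abs_of_pos (by linarith [hdiag i])] at hle
  have : |u i| ≤ 0 := by nlinarith [hdiag i, abs_nonneg (u i)]
  exact abs_nonpos_iff.mp ((hi k).trans this)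

theorem apply_eq_of_mulVec_eq_self (hW : W ∈ rowStochastic R ι) {G : SimpleGraph ι}
    (hG : G.Preconnected) (hadj : ∀ i j, G.Adj i j → 0 < W i j) (h : W *ᵥ u = u)
    (i j : ι) : u i = u j := by
  have : Nonempty ι := ⟨i⟩
  obtain ⟨k, hk⟩ := Finite.exists_max u
  -- `u a = ∑ c, W a c * u c` is an average of values `≤ u k`, so it equals the maximum `u k`
  -- only if every positively weighted `u c` does
  have hclosed : ∀ ⦃a b⦄, G.Adj a b → a ∈ {c | u c = u k} → b ∈ {c | u c = u k} := by
    intro a b hab ha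
    have hzero : ∑ c, W a c * (u k - u c) = 0 := by
      simp only [mul_sub, sum_sub_distrib, ← sum_mul, sum_row_of_mem_rowStochastic hW a,
        one_mul]
      rw [← ha]
      exact sub_eq_zero.mpr (congrFun h a).symm
    have hb := (sum_eq_zero_iff_of_nonneg fun c _ =>
      mul_nonneg (hW.1 a c) (sub_nonneg.mpr (hk c))).mp hzero b (mem_univ b)
    exact (sub_eq_zero.mp ((mul_eq_zero.mp hb).resolve_left (hadj a b hab).ne')).symm
  exact (hG.mem_of_adj_closed hclosed rfl i).trans (hG.mem_of_adj_closed hclosed rfl j).symm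

end RowStochastic

theorem IsHermitian.exists_eq_eigenvalues_of_mem_spectrum_map_ofReal {ι : Type*}
    [Fintype ι] [DecidableEq ι] {A : Matrix ι ι ℝ} (hA : A.IsHermitian) {μ : ℂ}
    (hμ : μ ∈ spectrum ℂ (A.map Complex.ofReal)) : ∃ i, μ = hA.eigenvalues i := by
  rw [mem_spectrum_iff_isRoot_charpoly,
    show A.map Complex.ofReal = A.map Complex.ofRealHom from rfl, charpoly_map,
    hA.charpoly_eq] at hμ
  simpa [Polynomial.eval_prod, Polynomial.map_prod, prod_eq_zero_iff, sub_eq_zero] using hμ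

theorem IsHermitian.eigenvectorBasis_ne_zero {ι : Type*} [Fintype ι] [DecidableEq ι]
    {A : Matrix ι ι ℝ} (hA : A.IsHermitian) (i : ι) :
    (⇑(hA.eigenvectorBasis i) : ι → ℝ) ≠ 0 :=
  fun h => hA.eigenvectorBasis.orthonormal.ne_zero i (by ext j; simpa using congrFun h j)

end Matrix

theorem specRad_lt_of_isSymm {n : ℕ} {A : Matrix (Fin n) (Fin n) ℝ} (hA : A.IsSymm)
    {r : ℝ} (hr : 0 < r)
    (h : ∀ (t : ℝ) (u : Fin n → ℝ), u ≠ 0 → A *ᵥ u = t • u → |t| < r) :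
    specRad A < r := by
  have hH : A.IsHermitian := isHermitian_iff_isSymm.mpr hA
  have hS : {r : ℝ | ∃ μ : ℂ, μ ∈ spectrum ℂ (A.map Complex.ofReal) ∧ r = ‖μ‖} =
      (‖·‖) '' spectrum ℂ (A.map Complex.ofReal) := by
    ext; simp [eq_comm]
  rw [specRad, hS]
  rcases (spectrum ℂ (A.map Complex.ofReal)).eq_empty_or_nonempty with hempty | hne
  · rwa [hempty, Set.image_empty, Real.sSup_empty]
  obtain ⟨μ, hμ, hsup⟩ := (hne.image (‖·‖)).csSup_mem ((finite_spectrum _).image _)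
  obtain ⟨i, rfl⟩ := hH.exists_eq_eigenvalues_of_mem_spectrum_map_ofReal hμ
  rw [← hsup]
  simpa only [Complex.norm_real, Real.norm_eq_abs] using
    h _ _ (hH.eigenvectorBasis_ne_zero i) (hH.mulVec_eigenvectorBasis i)

theorem jmat_mulVec {n : ℕ} (u : Fin n → ℝ) : Jmat n *ᵥ u = fun _ => (∑ j, u j) / n := by
  ext i
  simp [Jmat, mulVec, dotProduct, div_eq_inv_mul, Finset.mul_sum]

theorem sum_jmat_mulVec {n : ℕ} (u : Fin n → ℝ) : ∑ i, (Jmat n *ᵥ u) i = ∑ i, u i := by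
  rcases eq_or_ne n 0 with rfl | hn
  · simp
  · simp [jmat_mulVec, mul_div_cancel₀ _ (Nat.cast_ne_zero.mpr hn : (n : ℝ) ≠ 0)]

theorem jmat_isSymm (n : ℕ) : (Jmat n).IsSymm :=
  IsSymm.ext fun _ _ => rfl

theorem abs_lt_one_of_sub_jmat_mulVec_eq_smul {n : ℕ} {W : Matrix (Fin n) (Fin n) ℝ}
    (hW : W ∈ doublyStochastic ℝ (Fin n)) (hdiag : ∀ i, 0 < W i i)
    {G : SimpleGraph (Fin n)} (hG : G.Preconnected) (hadj : ∀ i j, G.Adj i j → 0 < W i j)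
    {u : Fin n → ℝ} (hu : u ≠ 0) {t : ℝ} (h : (W - Jmat n) *ᵥ u = t • u) : |t| < 1 := by
  rcases eq_or_ne t 0 with rfl | ht
  · simp
  have hrow := (mem_doublyStochastic_iff_mem_rowStochastic_and_mem_colStochastic.mp hW).1
  have hsum : ∑ i, u i = 0 := by
    have := congrArg (fun v => ∑ i, v i) h
    simp only [sub_mulVec, Pi.sub_apply, Finset.sum_sub_distrib, sum_jmat_mulVec,
      sum_mulVec_of_mem_doublyStochastic hW, sub_self, Pi.smul_apply, smul_eq_mul,
      ← Finset.mul_sum] at this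
    exact (mul_eq_zero.mp this.symm).resolve_left ht
  have hWu : W *ᵥ u = t • u := by
    rwa [sub_mulVec, jmat_mulVec, hsum, zero_div, ← Pi.zero_def, sub_zero] at h
  refine (abs_le_one_of_mulVec_eq_smul hrow hu hWu).lt_of_ne fun habs => hu ?_
  rcases (abs_eq zero_le_one).mp habs with rfl | rfl
  · rw [one_smul] at hWu
    have hconst := apply_eq_of_mulVec_eq_self hrow hG hadj hWu
    ext i
    have : (n : ℝ) * u i = 0 := by
      rw [← hsum, Finset.sum_congr rfl fun j _ => (hconst i j).symm]
      simp
    exact (mul_eq_zero.mp this).resolve_left (Nat.cast_ne_zero.mpr (Fin.pos i).ne')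
  · rw [neg_one_smul] at hWu
    exact eq_zero_of_mulVec_eq_neg hrow hdiag hWu

structure SimpleGraph.IsMetropolisWeights {V : Type*} [Fintype V] (G : SimpleGraph V)
    [DecidableRel G.Adj] (W : Matrix V V ℝ) : Prop where
  apply_of_adj : ∀ i j, i ≠ j → G.Adj i j →
    W i j = min (1 / (1 + (G.degree i : ℝ))) (1 / (1 + (G.degree j : ℝ)))
  apply_of_not_adj : ∀ i j, i ≠ j → ¬ G.Adj i j → W i j = 0
  apply_self : ∀ i, W i i = 1 - ∑ j ∈ G.neighborFinset i, W i j

namespace SimpleGraph.IsMetropolisWeights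

variable {V : Type*} [Fintype V] {G : SimpleGraph V} [DecidableRel G.Adj] {W : Matrix V V ℝ}

theorem isSymm (hW : G.IsMetropolisWeights W) : W.IsSymm := by
  refine IsSymm.ext fun i j => ?_
  rcases eq_or_ne i j with rfl | hij
  · rfl
  by_cases hadj : G.Adj i j
  · rw [hW.apply_of_adj i j hij hadj, hW.apply_of_adj j i hij.symm hadj.symm, min_comm]
  · rw [hW.apply_of_not_adj i j hij hadj,
      hW.apply_of_not_adj j i hij.symm fun h => hadj h.symm]

theorem apply_pos_of_adj (hW : G.IsMetropolisWeights W) (i j : V) (hadj : G.Adj i j) :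
    0 < W i j := by
  rw [hW.apply_of_adj i j hadj.ne hadj]
  exact lt_min (by positivity) (by positivity)

theorem sum_neighborFinset_lt_one (hW : G.IsMetropolisWeights W) (i : V) :
    ∑ j ∈ G.neighborFinset i, W i j < 1 := by
  have hd : (0 : ℝ) < 1 + G.degree i := by positivity
  calc ∑ j ∈ G.neighborFinset i, W i j
      ≤ ∑ _j ∈ G.neighborFinset i, 1 / (1 + (G.degree i : ℝ)) :=
        Finset.sum_le_sum fun j hj => by
          rw [mem_neighborFinset] at hj
          exact (hW.apply_of_adj i j hj.ne hj).trans_le (min_le_left _ _)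
    _ = G.degree i / (1 + G.degree i) := by
        rw [Finset.sum_const, card_neighborFinset_eq_degree, nsmul_eq_mul, mul_one_div]
    _ < 1 := (div_lt_one hd).mpr (lt_one_add _)

theorem apply_self_pos (hW : G.IsMetropolisWeights W) (i : V) : 0 < W i i := by
  rw [hW.apply_self i]
  exact sub_pos.mpr (hW.sum_neighborFinset_lt_one i)

theorem nonneg (hW : G.IsMetropolisWeights W) (i j : V) : 0 ≤ W i j := by
  rcases eq_or_ne i j with rfl | hij
  · exact (hW.apply_self_pos i).le
  by_cases hadj : G.Adj i j
  · exact (hW.apply_pos_of_adj i j hadj).le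
  · exact (hW.apply_of_not_adj i j hij hadj).ge

theorem sum_row [DecidableEq V] (hW : G.IsMetropolisWeights W) (i : V) : ∑ j, W i j = 1 := by
  have hoff : ∑ j ∈ Finset.univ.erase i, W i j = ∑ j ∈ G.neighborFinset i, W i j := by
    refine (Finset.sum_subset (fun j hj => ?_) fun j hj hnj => ?_).symm
    · rw [mem_neighborFinset] at hj
      exact Finset.mem_erase.mpr ⟨hj.ne', Finset.mem_univ j⟩
    · rw [mem_neighborFinset] at hnj
      exact hW.apply_of_not_adj i j (Finset.ne_of_mem_erase hj).symm hnj
  rw [← Finset.add_sum_erase _ _ (Finset.mem_univ i), hoff, hW.apply_self i, sub_add_cancel]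

theorem mem_doublyStochastic [DecidableEq V] (hW : G.IsMetropolisWeights W) :
    W ∈ doublyStochastic ℝ V :=
  mem_doublyStochastic_iff_sum.mpr ⟨hW.nonneg, hW.sum_row, fun j => by
    simpa only [hW.isSymm.apply] using hW.sum_row j⟩

end SimpleGraph.IsMetropolisWeights

theorem metropolis_weights_satisfy_consensus_condition_general
    (n : ℕ) (G : SimpleGraph (Fin n)) [DecidableRel G.Adj]
    (hconn : G.Connected)
    (WM : Matrix (Fin n) (Fin n) ℝ)
    (hadj : ∀ i j, i ≠ j → G.Adj i j →
      WM i j = min (1 / (1 + (G.degree i : ℝ))) (1 / (1 + (G.degree j : ℝ))))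
    (hnadj : ∀ i j, i ≠ j → ¬ G.Adj i j → WM i j = 0)
    (hdiag : ∀ i, WM i i = 1 - ∑ j ∈ G.neighborFinset i, WM i j) :
    WM.IsSymm ∧
    (∀ i j, 0 ≤ WM i j) ∧
    WM.mulVec (fun _ => 1) = (fun _ => 1) ∧
    WMᵀ.mulVec (fun _ => 1) = (fun _ => 1) ∧
    (∀ i, 0 < WM i i) ∧
    specRad (WM - Jmat n) < 1 := by
  have hW : G.IsMetropolisWeights WM := ⟨hadj, hnadj, hdiag⟩
  have hds := hW.mem_doublyStochastic
  refine ⟨hW.isSymm, hW.nonneg, hds.2.1, ?_, hW.apply_self_pos, ?_⟩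
  · rw [mulVec_transpose]
    exact hds.2.2
  · refine specRad_lt_of_isSymm (hW.isSymm.sub (jmat_isSymm n)) one_pos fun t u hu h => ?_
    exact abs_lt_one_of_sub_jmat_mulVec_eq_smul hds hW.apply_self_pos hconn.preconnected
      hW.apply_pos_of_adj hu h

theorem metropolis_weights_satisfy_consensus_condition
    (n : ℕ) (hn : 2 ≤ n) (G : SimpleGraph (Fin n)) [DecidableRel G.Adj]
    (hconn : G.Connected)
    (WM : Matrix (Fin n) (Fin n) ℝ)
    (hadj : ∀ i j, i ≠ j → G.Adj i j →
      WM i j = min (1 / (1 + (G.degree i : ℝ))) (1 / (1 + (G.degree j : ℝ))))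
    (hnadj : ∀ i j, i ≠ j → ¬ G.Adj i j → WM i j = 0)
    (hdiag : ∀ i, WM i i = 1 - ∑ j ∈ G.neighborFinset i, WM i j) :
    WM.IsSymm ∧
    (∀ i j, 0 ≤ WM i j) ∧
    WM.mulVec (fun _ => 1) = (fun _ => 1) ∧
    WMᵀ.mulVec (fun _ => 1) = (fun _ => 1) ∧
    (∀ i, 0 < WM i i) ∧
    specRad (WM - Jmat n) < 1 :=
  metropolis_weights_satisfy_consensus_condition_general n G hconn WM hadj hnadj hdiag
end
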